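/- Let D ⊂ ℂ be a bounded open set and let T and T̄_{z0,λ} satisfy the bounds: ‖T w‖_{C(closure D)} ≤ η₁ ‖w‖_{C(closure D)} for continuous w, ‖T̄_{z0,λ} u‖_{C(closure D)} ≤ η₂ |λ|^{−1/2} ‖u‖ for u with continuous ∂/∂z̄, and the pointwise bound |T̄_{z0,λ} u(ζ)| ≤ η₃ log(3|λ|)(1+|ζ−z0|)/(|λ||ζ−z0|²) ‖u‖ for ζ ≠ z0. Then the composition g_{z0,λ} = (1/4) T ∘ T̄_{z0,λ} satisfies ‖g_{z0,λ} u‖_{C(closure D)} ≤ η(D) (log(3|λ|)/|λ|^{3/4}) ‖u‖ for |λ| ≥ 1, for some constant η(D) depending only on D (and η₁, η₂, η₃). -/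

import Mathlib

open MeasureTheory ComplexConjugate

/-- Max entrywise modulus of a complex matrix. -/
noncomputable def mnorm {n : ℕ} (M : Matrix (Fin n) (Fin n) ℂ) : ℝ :=
  ⨆ i, ⨆ j, ‖M i j‖

/-- The Wirtinger derivative `∂/∂z̄ = (1/2)(∂/∂x₁ + i ∂/∂x₂)`. -/
noncomputable def dbar (f : ℂ → ℂ) (z : ℂ) : ℂ :=
  (1 / 2) * (fderiv ℝ f z 1 + Complex.I * fderiv ℝ f z Complex.I)

/-- `u` and `∂u/∂z̄` are continuous on `closure D` (the space `C¹_z̄(closure D)`), entrywise. -/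
def C1zbarOn {n : ℕ} (D : Set ℂ) (u : ℂ → Matrix (Fin n) (Fin n) ℂ) : Prop :=
  (∀ i j, ContinuousOn (fun z => u z i j) (closure D)) ∧
  (∀ i j, ∀ z ∈ D, DifferentiableAt ℝ (fun w => u w i j) z) ∧
  (∀ i j, ContinuousOn (dbar fun z => u z i j) (closure D))

/-- The `C¹_z̄` norm: max of the sup norms of `u` and `∂u/∂z̄` over `closure D`. -/
noncomputable def c1norm {n : ℕ} (D : Set ℂ) (u : ℂ → Matrix (Fin n) (Fin n) ℂ) : ℝ :=
  max (⨆ z : closure D, mnorm (u (z : ℂ)))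
      (⨆ z : closure D, mnorm (Matrix.of fun i j => dbar (fun w => u w i j) (z : ℂ)))

/-!
Bound `|g u(z)|` by `(4π)⁻¹ ∫_D |T̄u(ζ)| |ζ - z|⁻¹ dA(ζ)` and split `D` at the disc `B(z0, δ)`.
On the disc, the uniform bound `|T̄u| ≤ η₂ |λ|^{-1/2} ‖u‖` together with
`∫_{B(z0,δ)} |ζ - z|⁻¹ ≤ 6πδ` gives a term of order `|λ|^{-1/2} δ`. Off the disc, the pointwise
bound reduces everything to `∫_{|ζ - z0| ≥ δ} |ζ - z0|⁻² |ζ - z|⁻¹ ≤ 7π/δ`, uniformly in `z`: where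
`|ζ - z0| ≤ 2|ζ - z|` the kernel is at most `2|ζ - z0|⁻³`, and elsewhere `ζ` lies in `B(z, |z - z0|)`
with `|ζ - z0| ≥ 2|z - z0|/3`. This gives a term of order `log(3|λ|) |λ|⁻¹ δ⁻¹`, and the choice
`δ = |λ|^{-1/4}/2` makes both terms `O(log(3|λ|) |λ|^{-3/4})`. The radial integrals are computed
in polar coordinates.
-/

open Set Metric Real
open scoped ENNReal

lemma Metric.subset_ball_two_mul_of_mem_closure {X : Type*} [PseudoMetricSpace X] {D : Set X}
    {c z : X} {R : ℝ} (hD : D ⊆ ball c R) (hz : z ∈ closure D) : D ⊆ ball z (2 * R) := by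
  have hzc : dist z c ≤ R :=
    closure_minimal (hD.trans ball_subset_closedBall) isClosed_closedBall hz
  intro ζ hζ
  rw [mem_ball]
  linarith [dist_triangle_right ζ z c, mem_ball.1 (hD hζ)]

theorem Complex.lintegral_comp_norm_sub (c : ℂ) {g : ℝ → ℝ≥0∞} (hg : Measurable g) :
    ∫⁻ ζ, g ‖ζ - c‖ = ENNReal.ofReal (2 * π) * ∫⁻ r in Ioi 0, ENNReal.ofReal r * g r := by
  have hradial : ∀ p ∈ polarCoord.target,
      ENNReal.ofReal p.1 • g ‖Complex.polarCoord.symm p‖ = ENNReal.ofReal p.1 * g p.1 := by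
    rintro p ⟨hp : 0 < p.1, -⟩
    rw [Complex.norm_polarCoord_symm, abs_of_pos hp, smul_eq_mul]
  rw [lintegral_sub_right_eq_self (fun ζ => g ‖ζ‖) c,
    ← Complex.lintegral_comp_polarCoord_symm,
    setLIntegral_congr_fun polarCoord.open_target.measurableSet hradial, polarCoord_target,
    Measure.volume_eq_prod, ← Measure.prod_restrict, lintegral_prod _ (by fun_prop)]
  simp_rw [setLIntegral_const, Real.volume_Ioo, lintegral_mul_const' _ _ ENNReal.ofReal_ne_top]
  ring_nf

theorem Complex.setLIntegral_ball_inv_norm_sub (z : ℂ) (r : ℝ) :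
    ∫⁻ ζ in ball z r, ENNReal.ofReal ‖ζ - z‖⁻¹ = ENNReal.ofReal (2 * π * r) := by
  have hradial : (ball z r).indicator (fun ζ => ENNReal.ofReal ‖ζ - z‖⁻¹) =
      fun ζ => (Iio r).indicator (fun ρ => ENNReal.ofReal ρ⁻¹) ‖ζ - z‖ := by
    ext ζ; simp [indicator, dist_eq_norm]
  have hshell : ∀ ρ ∈ Ioi (0 : ℝ),
      ENNReal.ofReal ρ * (Iio r).indicator (fun ρ => ENNReal.ofReal ρ⁻¹) ρ =
        (Iio r).indicator 1 ρ := by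
    intro ρ (hρ : 0 < ρ)
    by_cases hρr : ρ < r
    · simp [hρr, ← ENNReal.ofReal_mul hρ.le, mul_inv_cancel₀ hρ.ne']
    · simp [hρr]
  rw [← lintegral_indicator measurableSet_ball, hradial,
    Complex.lintegral_comp_norm_sub z (Measurable.indicator (by fun_prop) measurableSet_Iio),
    setLIntegral_congr_fun measurableSet_Ioi hshell, lintegral_indicator_one measurableSet_Iio,
    Measure.restrict_apply measurableSet_Iio, Iio_inter_Ioi, Real.volume_Ioo, sub_zero,
    ← ENNReal.ofReal_mul (by positivity)]

theorem Complex.setLIntegral_compl_ball_inv_norm_sub_pow_three (z : ℂ) {δ : ℝ} (hδ : 0 < δ) :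
    ∫⁻ ζ in (ball z δ)ᶜ, ENNReal.ofReal (‖ζ - z‖ ^ 3)⁻¹ = ENNReal.ofReal (2 * π / δ) := by
  have hradial : (ball z δ)ᶜ.indicator (fun ζ => ENNReal.ofReal (‖ζ - z‖ ^ 3)⁻¹) =
      fun ζ => (Ici δ).indicator (fun ρ => ENNReal.ofReal (ρ ^ 3)⁻¹) ‖ζ - z‖ := by
    ext ζ; simp [indicator, dist_eq_norm]
  have hshell : ∀ ρ ∈ Ioi (0 : ℝ),
      ENNReal.ofReal ρ * (Ici δ).indicator (fun ρ => ENNReal.ofReal (ρ ^ 3)⁻¹) ρ =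
        (Ici δ).indicator (fun ρ => ENNReal.ofReal (ρ ^ (-2 : ℝ))) ρ := by
    intro ρ (hρ : 0 < ρ)
    by_cases hρδ : δ ≤ ρ
    · simp only [indicator_of_mem (mem_Ici.2 hρδ), ← ENNReal.ofReal_mul hρ.le]
      congr 1
      rw [Real.rpow_neg hρ.le]
      norm_cast
      field_simp
    · simp [hρδ]
  have hpow : ∫⁻ ρ in Ioi δ, ENNReal.ofReal (ρ ^ (-2 : ℝ)) = ENNReal.ofReal δ⁻¹ := by
    rw [← ofReal_integral_eq_lintegral_ofReal (integrableOn_Ioi_rpow_of_lt (by norm_num) hδ)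
      (ae_restrict_of_forall_mem measurableSet_Ioi fun ρ hρ => Real.rpow_nonneg (hδ.trans hρ).le _),
      integral_Ioi_rpow_of_lt (by norm_num) hδ]
    norm_num [Real.rpow_neg_one]
  rw [← lintegral_indicator measurableSet_ball.compl, hradial,
    Complex.lintegral_comp_norm_sub z (Measurable.indicator (by fun_prop) measurableSet_Ici),
    setLIntegral_congr_fun measurableSet_Ioi hshell, lintegral_indicator measurableSet_Ici,
    Measure.restrict_restrict measurableSet_Ici, inter_eq_left.2 (Ici_subset_Ioi.2 hδ),
    ← restrict_Ioi_eq_restrict_Ici, hpow, ← ENNReal.ofReal_mul (by positivity), div_eq_mul_inv]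

theorem Complex.setLIntegral_ball_inv_norm_sub_le (z z0 : ℂ) {δ : ℝ} (hδ : 0 < δ) :
    ∫⁻ ζ in ball z0 δ, ENNReal.ofReal ‖ζ - z‖⁻¹ ≤ ENNReal.ofReal (6 * π * δ) := by
  set S := ball z0 δ ∩ {ζ | ‖ζ - z0‖ ≤ ‖ζ - z‖}
  have hcover : ball z0 δ ⊆ ball z (2 * δ) ∪ S := by
    intro ζ hζ
    rw [mem_ball, dist_eq_norm] at hζ
    by_cases hζz : ‖ζ - z‖ < 2 * δ
    · exact Or.inl (by rwa [mem_ball, dist_eq_norm])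
    · exact Or.inr ⟨by rwa [mem_ball, dist_eq_norm], by simp only [mem_ofPred_eq]; linarith⟩
  have hS : ∫⁻ ζ in S, ENNReal.ofReal ‖ζ - z‖⁻¹ ≤ ∫⁻ ζ in ball z0 δ, ENNReal.ofReal ‖ζ - z0‖⁻¹ :=
    calc ∫⁻ ζ in S, ENNReal.ofReal ‖ζ - z‖⁻¹ ≤ ∫⁻ ζ in S, ENNReal.ofReal ‖ζ - z0‖⁻¹ :=
          setLIntegral_mono_ae (by fun_prop) <| (Measure.ae_ne volume z0).mono fun ζ hne hζ =>
            ENNReal.ofReal_le_ofReal (inv_anti₀ (norm_pos_iff.2 (sub_ne_zero.2 hne)) hζ.2)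
      _ ≤ _ := lintegral_mono_set inter_subset_left
  calc ∫⁻ ζ in ball z0 δ, ENNReal.ofReal ‖ζ - z‖⁻¹
      ≤ (∫⁻ ζ in ball z (2 * δ), ENNReal.ofReal ‖ζ - z‖⁻¹) + ∫⁻ ζ in S, ENNReal.ofReal ‖ζ - z‖⁻¹ :=
        (lintegral_mono_set hcover).trans (lintegral_union_le _ _ _)
    _ ≤ ENNReal.ofReal (2 * π * (2 * δ)) + ENNReal.ofReal (2 * π * δ) :=
        add_le_add (Complex.setLIntegral_ball_inv_norm_sub z _).le
          (hS.trans (Complex.setLIntegral_ball_inv_norm_sub z0 δ).le)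
    _ = ENNReal.ofReal (6 * π * δ) := by
        rw [← ENNReal.ofReal_add (by positivity) (by positivity)]; ring_nf

theorem Complex.setLIntegral_inv_sq_mul_inv_le_of_le_two_mul (z z0 : ℂ) {δ : ℝ} (hδ : 0 < δ) :
    ∫⁻ ζ in (ball z0 δ)ᶜ ∩ {ζ | ‖ζ - z0‖ ≤ 2 * ‖ζ - z‖},
        ENNReal.ofReal ((‖ζ - z0‖ ^ 2)⁻¹ * ‖ζ - z‖⁻¹) ≤ ENNReal.ofReal (4 * π / δ) := by
  have hpt : ∀ ζ ∈ (ball z0 δ)ᶜ ∩ {ζ | ‖ζ - z0‖ ≤ 2 * ‖ζ - z‖},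
      ENNReal.ofReal ((‖ζ - z0‖ ^ 2)⁻¹ * ‖ζ - z‖⁻¹) ≤
        ENNReal.ofReal 2 * ENNReal.ofReal (‖ζ - z0‖ ^ 3)⁻¹ := by
    rintro ζ ⟨hζ, hba : ‖ζ - z0‖ ≤ 2 * ‖ζ - z‖⟩
    rw [mem_compl_iff, mem_ball, dist_eq_norm, not_lt] at hζ
    have hb := hδ.trans_le hζ
    have hinv : ‖ζ - z‖⁻¹ ≤ 2 / ‖ζ - z0‖ := by
      rw [inv_eq_one_div, div_le_div_iff₀ (by linarith) hb]; linarith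
    rw [← ENNReal.ofReal_mul zero_le_two]
    apply ENNReal.ofReal_le_ofReal
    calc (‖ζ - z0‖ ^ 2)⁻¹ * ‖ζ - z‖⁻¹ ≤ (‖ζ - z0‖ ^ 2)⁻¹ * (2 / ‖ζ - z0‖) := by gcongr
      _ = 2 * (‖ζ - z0‖ ^ 3)⁻¹ := by field_simp
  calc _ ≤ ∫⁻ ζ in (ball z0 δ)ᶜ ∩ {ζ | ‖ζ - z0‖ ≤ 2 * ‖ζ - z‖},
          ENNReal.ofReal 2 * ENNReal.ofReal (‖ζ - z0‖ ^ 3)⁻¹ :=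
        setLIntegral_mono (by fun_prop) hpt
    _ ≤ ENNReal.ofReal 2 * ∫⁻ ζ in (ball z0 δ)ᶜ, ENNReal.ofReal (‖ζ - z0‖ ^ 3)⁻¹ := by
        rw [lintegral_const_mul _ (by fun_prop)]
        gcongr
        exact inter_subset_left
    _ = ENNReal.ofReal (4 * π / δ) := by
        rw [Complex.setLIntegral_compl_ball_inv_norm_sub_pow_three z0 hδ,
          ← ENNReal.ofReal_mul zero_le_two]
        ring_nf

theorem Complex.setLIntegral_inv_sq_mul_inv_le_of_two_mul_lt (z z0 : ℂ) {δ : ℝ} (hδ : 0 < δ) :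
    ∫⁻ ζ in (ball z0 δ)ᶜ ∩ {ζ | 2 * ‖ζ - z‖ < ‖ζ - z0‖},
        ENNReal.ofReal ((‖ζ - z0‖ ^ 2)⁻¹ * ‖ζ - z‖⁻¹) ≤ ENNReal.ofReal (3 * π / δ) := by
  set Q := (ball z0 δ)ᶜ ∩ {ζ | 2 * ‖ζ - z‖ < ‖ζ - z0‖}
  have hQ : Q ⊆ ball z ‖z - z0‖ := by
    rintro ζ ⟨-, hab : 2 * ‖ζ - z‖ < ‖ζ - z0‖⟩
    rw [mem_ball, dist_eq_norm]
    linarith [norm_sub_le_norm_sub_add_norm_sub ζ z z0]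
  have hpt : ∀ ζ ∈ Q, ENNReal.ofReal ((‖ζ - z0‖ ^ 2)⁻¹ * ‖ζ - z‖⁻¹) ≤
      ENNReal.ofReal (3 / (2 * δ * ‖z - z0‖)) * ENNReal.ofReal ‖ζ - z‖⁻¹ := by
    intro ζ hζQ
    have hd : 0 < ‖z - z0‖ := dist_nonneg.trans_lt (hQ hζQ)
    obtain ⟨hζ, hab : 2 * ‖ζ - z‖ < ‖ζ - z0‖⟩ := hζQ
    rw [mem_compl_iff, mem_ball, dist_eq_norm, not_lt] at hζ
    have htri : ‖z - z0‖ ≤ ‖ζ - z‖ + ‖ζ - z0‖ := by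
      simpa [norm_sub_rev z ζ] using norm_sub_le_norm_sub_add_norm_sub z ζ z0
    rw [← ENNReal.ofReal_mul (by positivity)]
    apply ENNReal.ofReal_le_ofReal
    gcongr
    calc (‖ζ - z0‖ ^ 2)⁻¹ ≤ (δ * (2 * ‖z - z0‖ / 3))⁻¹ :=
          inv_anti₀ (by positivity) (by nlinarith)
      _ = 3 / (2 * δ * ‖z - z0‖) := by field_simp
  calc _ ≤ ∫⁻ ζ in Q, ENNReal.ofReal (3 / (2 * δ * ‖z - z0‖)) * ENNReal.ofReal ‖ζ - z‖⁻¹ :=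
        setLIntegral_mono (by fun_prop) hpt
    _ ≤ ENNReal.ofReal (3 / (2 * δ * ‖z - z0‖)) * ENNReal.ofReal (2 * π * ‖z - z0‖) := by
        rw [lintegral_const_mul _ (by fun_prop), ← Complex.setLIntegral_ball_inv_norm_sub]
        gcongr
    _ ≤ ENNReal.ofReal (3 * π / δ) := by
        rw [← ENNReal.ofReal_mul (by positivity)]
        apply ENNReal.ofReal_le_ofReal
        calc 3 / (2 * δ * ‖z - z0‖) * (2 * π * ‖z - z0‖)
            = 3 * π / δ * (‖z - z0‖ / ‖z - z0‖) := by ring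
          _ ≤ 3 * π / δ := mul_le_of_le_one_right (by positivity) (div_self_le_one _)

theorem Complex.setLIntegral_compl_ball_inv_sq_mul_inv_le (z z0 : ℂ) {δ : ℝ} (hδ : 0 < δ) :
    ∫⁻ ζ in (ball z0 δ)ᶜ, ENNReal.ofReal ((‖ζ - z0‖ ^ 2)⁻¹ * ‖ζ - z‖⁻¹) ≤
      ENNReal.ofReal (7 * π / δ) := by
  have hcover : (ball z0 δ)ᶜ ⊆ ((ball z0 δ)ᶜ ∩ {ζ | ‖ζ - z0‖ ≤ 2 * ‖ζ - z‖}) ∪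
      ((ball z0 δ)ᶜ ∩ {ζ | 2 * ‖ζ - z‖ < ‖ζ - z0‖}) := fun ζ hζ =>
    (le_or_gt ‖ζ - z0‖ (2 * ‖ζ - z‖)).imp (⟨hζ, ·⟩) (⟨hζ, ·⟩)
  calc _ ≤ _ := (lintegral_mono_set hcover).trans (lintegral_union_le _ _ _)
    _ ≤ ENNReal.ofReal (4 * π / δ) + ENNReal.ofReal (3 * π / δ) :=
        add_le_add (Complex.setLIntegral_inv_sq_mul_inv_le_of_le_two_mul z z0 hδ)
          (Complex.setLIntegral_inv_sq_mul_inv_le_of_two_mul_lt z z0 hδ)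
    _ = ENNReal.ofReal (7 * π / δ) := by
        rw [← ENNReal.ofReal_add (by positivity) (by positivity)]; ring_nf

theorem Complex.setLIntegral_inter_ball_norm_div_sub_le {D : Set ℂ} {f : ℂ → ℂ} {z z0 : ℂ}
    {δ A : ℝ} (hδ : 0 < δ) (hA : 0 ≤ A) (hnear : ∀ ζ ∈ D, ‖ζ - z0‖ < δ → ‖f ζ‖ ≤ A) :
    ∫⁻ ζ in D ∩ ball z0 δ, ENNReal.ofReal ‖f ζ / (ζ - z)‖ ≤ ENNReal.ofReal (6 * π * A * δ) :=
  calc ∫⁻ ζ in D ∩ ball z0 δ, ENNReal.ofReal ‖f ζ / (ζ - z)‖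
      ≤ ∫⁻ ζ in D ∩ ball z0 δ, ENNReal.ofReal A * ENNReal.ofReal ‖ζ - z‖⁻¹ := by
        refine setLIntegral_mono (by fun_prop) fun ζ ⟨hζD, hζ⟩ => ?_
        rw [mem_ball, dist_eq_norm] at hζ
        rw [← ENNReal.ofReal_mul hA, norm_div, div_eq_mul_inv]
        gcongr
        exact hnear ζ hζD hζ
    _ ≤ ENNReal.ofReal A * ∫⁻ ζ in ball z0 δ, ENNReal.ofReal ‖ζ - z‖⁻¹ := by
        rw [lintegral_const_mul _ (by fun_prop)]
        gcongr
        exact inter_subset_right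
    _ ≤ ENNReal.ofReal A * ENNReal.ofReal (6 * π * δ) := by
        gcongr
        exact Complex.setLIntegral_ball_inv_norm_sub_le z z0 hδ
    _ = ENNReal.ofReal (6 * π * A * δ) := by
        rw [← ENNReal.ofReal_mul hA]; ring_nf

theorem Complex.setLIntegral_sdiff_ball_norm_div_sub_le {D : Set ℂ} {f : ℂ → ℂ} {z z0 : ℂ}
    {ρ δ B : ℝ} (hDz : D ⊆ ball z ρ) (hρ : 0 ≤ ρ) (hδ : 0 < δ) (hB : 0 ≤ B)
    (hfar : ∀ ζ ∈ D, δ ≤ ‖ζ - z0‖ → ‖f ζ‖ ≤ B * (1 + ‖ζ - z0‖) / ‖ζ - z0‖ ^ 2) :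
    ∫⁻ ζ in D \ ball z0 δ, ENNReal.ofReal ‖f ζ / (ζ - z)‖ ≤
      ENNReal.ofReal ((7 + 2 * ρ) * π * B / δ) := by
  have hpt : ∀ ζ ∈ D \ ball z0 δ, ENNReal.ofReal ‖f ζ / (ζ - z)‖ ≤
      ENNReal.ofReal B * ENNReal.ofReal ((‖ζ - z0‖ ^ 2)⁻¹ * ‖ζ - z‖⁻¹) +
        ENNReal.ofReal (B / δ) * ENNReal.ofReal ‖ζ - z‖⁻¹ := by
    rintro ζ ⟨hζD, hζ⟩
    rw [mem_ball, dist_eq_norm, not_lt] at hζ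
    have hb := hδ.trans_le hζ
    rw [← ENNReal.ofReal_mul hB, ← ENNReal.ofReal_mul (by positivity),
      ← ENNReal.ofReal_add (by positivity) (by positivity), norm_div, div_eq_mul_inv]
    apply ENNReal.ofReal_le_ofReal
    calc ‖f ζ‖ * ‖ζ - z‖⁻¹ ≤ B * (1 + ‖ζ - z0‖) / ‖ζ - z0‖ ^ 2 * ‖ζ - z‖⁻¹ := by
          gcongr; exact hfar ζ hζD hζ
      _ = B * ((‖ζ - z0‖ ^ 2)⁻¹ * ‖ζ - z‖⁻¹) + B / ‖ζ - z0‖ * ‖ζ - z‖⁻¹ := by field_simp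
      _ ≤ B * ((‖ζ - z0‖ ^ 2)⁻¹ * ‖ζ - z‖⁻¹) + B / δ * ‖ζ - z‖⁻¹ := by gcongr
  calc _ ≤ ∫⁻ ζ in D \ ball z0 δ, (ENNReal.ofReal B *
          ENNReal.ofReal ((‖ζ - z0‖ ^ 2)⁻¹ * ‖ζ - z‖⁻¹) +
            ENNReal.ofReal (B / δ) * ENNReal.ofReal ‖ζ - z‖⁻¹) :=
        setLIntegral_mono (by fun_prop) hpt
    _ ≤ ENNReal.ofReal B *
            (∫⁻ ζ in (ball z0 δ)ᶜ, ENNReal.ofReal ((‖ζ - z0‖ ^ 2)⁻¹ * ‖ζ - z‖⁻¹)) +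
          ENNReal.ofReal (B / δ) * ∫⁻ ζ in ball z ρ, ENNReal.ofReal ‖ζ - z‖⁻¹ := by
        rw [lintegral_add_left (by fun_prop), lintegral_const_mul _ (by fun_prop),
          lintegral_const_mul _ (by fun_prop)]
        gcongr
        · exact sdiff_subset_compl _ _
        · exact sdiff_subset.trans hDz
    _ ≤ ENNReal.ofReal B * ENNReal.ofReal (7 * π / δ) +
          ENNReal.ofReal (B / δ) * ENNReal.ofReal (2 * π * ρ) := by
        rw [Complex.setLIntegral_ball_inv_norm_sub]
        gcongr
        exact Complex.setLIntegral_compl_ball_inv_sq_mul_inv_le z z0 hδ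
    _ = ENNReal.ofReal ((7 + 2 * ρ) * π * B / δ) := by
        rw [← ENNReal.ofReal_mul hB, ← ENNReal.ofReal_mul (by positivity),
          ← ENNReal.ofReal_add (by positivity) (by positivity)]
        ring_nf

theorem Complex.setLIntegral_norm_div_sub_le {D : Set ℂ} {f : ℂ → ℂ} {z z0 : ℂ} {ρ δ A B : ℝ}
    (hDz : D ⊆ ball z ρ) (hρ : 0 ≤ ρ) (hδ : 0 < δ) (hA : 0 ≤ A) (hB : 0 ≤ B)
    (hnear : ∀ ζ ∈ D, ‖ζ - z0‖ < δ → ‖f ζ‖ ≤ A)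
    (hfar : ∀ ζ ∈ D, δ ≤ ‖ζ - z0‖ → ‖f ζ‖ ≤ B * (1 + ‖ζ - z0‖) / ‖ζ - z0‖ ^ 2) :
    ∫⁻ ζ in D, ENNReal.ofReal ‖f ζ / (ζ - z)‖ ≤
      ENNReal.ofReal (6 * π * A * δ + (7 + 2 * ρ) * π * B / δ) :=
  calc _ ≤ _ := (lintegral_mono_set (inter_union_sdiff D (ball z0 δ)).ge).trans
        (lintegral_union_le _ _ _)
    _ ≤ ENNReal.ofReal (6 * π * A * δ) + ENNReal.ofReal ((7 + 2 * ρ) * π * B / δ) :=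
        add_le_add (Complex.setLIntegral_inter_ball_norm_div_sub_le hδ hA hnear)
          (Complex.setLIntegral_sdiff_ball_norm_div_sub_le hDz hρ hδ hB hfar)
    _ = _ := (ENNReal.ofReal_add (by positivity) (by positivity)).symm

theorem Complex.norm_cauchyTransform_le {D : Set ℂ} {f : ℂ → ℂ} {z z0 : ℂ} {ρ δ A B : ℝ}
    (hDz : D ⊆ ball z ρ) (hρ : 0 ≤ ρ) (hδ : 0 < δ) (hA : 0 ≤ A) (hB : 0 ≤ B)
    (hnear : ∀ ζ ∈ D, ‖ζ - z0‖ < δ → ‖f ζ‖ ≤ A)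
    (hfar : ∀ ζ ∈ D, δ ≤ ‖ζ - z0‖ → ‖f ζ‖ ≤ B * (1 + ‖ζ - z0‖) / ‖ζ - z0‖ ^ 2) :
    ‖-(1 / (π : ℂ)) * ∫ ζ in D, f ζ / (ζ - z)‖ ≤ 6 * A * δ + (7 + 2 * ρ) * B / δ := by
  have hlint := Complex.setLIntegral_norm_div_sub_le hDz hρ hδ hA hB hnear hfar
  have hπ : ‖-(1 / (π : ℂ))‖ = π⁻¹ := by simp [abs_of_pos pi_pos]
  calc ‖-(1 / (π : ℂ)) * ∫ ζ in D, f ζ / (ζ - z)‖ = π⁻¹ * ‖∫ ζ in D, f ζ / (ζ - z)‖ := by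
        rw [norm_mul, hπ]
    _ ≤ π⁻¹ * (6 * π * A * δ + (7 + 2 * ρ) * π * B / δ) := by
        gcongr
        exact (norm_integral_le_lintegral_norm _).trans
          (ENNReal.toReal_le_of_le_ofReal (by positivity) hlint)
    _ = 6 * A * δ + (7 + 2 * ρ) * B / δ := by field_simp

lemma mnorm_nonneg {n : ℕ} (M : Matrix (Fin n) (Fin n) ℂ) : 0 ≤ mnorm M :=
  Real.iSup_nonneg fun _ => Real.iSup_nonneg fun _ => norm_nonneg _

lemma norm_le_mnorm {n : ℕ} (M : Matrix (Fin n) (Fin n) ℂ) (i j : Fin n) : ‖M i j‖ ≤ mnorm M :=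
  (le_ciSup (Set.finite_range fun j => ‖M i j‖).bddAbove j).trans
    (le_ciSup (f := fun i => ⨆ j, ‖M i j‖) (Set.finite_range _).bddAbove i)

lemma mnorm_le {n : ℕ} (M : Matrix (Fin n) (Fin n) ℂ) {C : ℝ} (hC : 0 ≤ C)
    (h : ∀ i j, ‖M i j‖ ≤ C) : mnorm M ≤ C :=
  Real.iSup_le (fun i => Real.iSup_le (h i) hC) hC

lemma c1norm_nonneg {n : ℕ} (D : Set ℂ) (u : ℂ → Matrix (Fin n) (Fin n) ℂ) : 0 ≤ c1norm D u :=
  (Real.iSup_nonneg fun _ => mnorm_nonneg _).trans (le_max_left _ _)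

lemma one_le_log_three_mul {L : ℝ} (hL : 1 ≤ L) : 1 ≤ Real.log (3 * L) := by
  rw [Real.le_log_iff_exp_le (by positivity)]
  linarith [Real.exp_one_lt_d9]

lemma near_far_balance {L a b : ℝ} (hL : 1 ≤ L) (ha : 0 ≤ a) (hb : 0 ≤ b) :
    (6 * (a / √L) * (2 * L ^ (1 / 4 : ℝ))⁻¹ +
        b * (Real.log (3 * L) / L) / (2 * L ^ (1 / 4 : ℝ))⁻¹) / 4 ≤
      (a + b) * (Real.log (3 * L) / L ^ (3 / 4 : ℝ)) := by
  set t := L ^ (1 / 4 : ℝ)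
  have ht : 0 < t := by positivity
  have hsqrt : √L = t ^ 2 := by
    rw [Real.sqrt_eq_rpow, ← Real.rpow_mul_natCast (by positivity)]; norm_num
  have hL4 : L = t ^ 4 := by
    rw [← Real.rpow_mul_natCast (by positivity)]; norm_num
  have hL34 : L ^ (3 / 4 : ℝ) = t ^ 3 := by
    rw [← Real.rpow_mul_natCast (by positivity)]; norm_num
  have hlog := one_le_log_three_mul hL
  generalize Real.log (3 * L) = ℓ at hlog ⊢
  rw [hL34, hsqrt, hL4]
  calc (6 * (a / t ^ 2) * (2 * t)⁻¹ + b * (ℓ / t ^ 4) / (2 * t)⁻¹) / 4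
      = (3 / 4 * a + b * ℓ / 2) / t ^ 3 := by field_simp; ring
    _ ≤ (a + b) * ℓ / t ^ 3 := by
        gcongr
        nlinarith [mul_le_mul_of_nonneg_left hlog ha, mul_le_mul_of_nonneg_left hlog hb]
    _ = (a + b) * (ℓ / t ^ 3) := by ring

theorem stmt11_general (n : ℕ) (D : Set ℂ) (hDb : Bornology.IsBounded D)
    (Tb : ℂ → ℂ → (ℂ → Matrix (Fin n) (Fin n) ℂ) → ℂ → Matrix (Fin n) (Fin n) ℂ)
    (η₂ η₃ : ℝ) (hη₂ : 0 < η₂) (hη₃ : 0 < η₃)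
    (hTb1 : ∀ (z0 lam : ℂ), 1 ≤ ‖lam‖ →
      ∀ u : ℂ → Matrix (Fin n) (Fin n) ℂ, C1zbarOn D u → ∀ ζ ∈ closure D,
        mnorm (Tb z0 lam u ζ) ≤ η₂ / Real.sqrt (‖lam‖) * c1norm D u)
    (hTb2 : ∀ (z0 lam : ℂ), 1 ≤ ‖lam‖ →
      ∀ u : ℂ → Matrix (Fin n) (Fin n) ℂ, C1zbarOn D u → ∀ ζ ∈ closure D, ζ ≠ z0 →
        mnorm (Tb z0 lam u ζ) ≤
          η₃ * Real.log (3 * ‖lam‖) * (1 + ‖ζ - z0‖) /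
            (‖lam‖ * ‖ζ - z0‖ ^ 2) * c1norm D u) :
    ∃ η : ℝ, 0 < η ∧ ∀ (z0 lam : ℂ), 1 ≤ ‖lam‖ →
      ∀ u : ℂ → Matrix (Fin n) (Fin n) ℂ, C1zbarOn D u → ∀ z ∈ closure D,
        mnorm (Matrix.of fun i j =>
            (1 / 4 : ℂ) * (-(1 / (Real.pi : ℂ)) * ∫ ζ in D, Tb z0 lam u ζ i j / (ζ - z))) ≤
          η * (Real.log (3 * ‖lam‖) / ‖lam‖ ^ (3/4 : ℝ)) * c1norm D u := by
  obtain ⟨R, hR, hDR⟩ := hDb.subset_ball_lt 0 0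
  refine ⟨η₂ + (7 + 4 * R) * η₃, by positivity, fun z0 lam hlam u hu z hz => ?_⟩
  set L := ‖lam‖
  set δ := (2 * L ^ (1 / 4 : ℝ))⁻¹
  have hδ : 0 < δ := by positivity
  have hlog := one_le_log_three_mul hlam
  have hK := c1norm_nonneg D u
  refine mnorm_le _ (by positivity) fun i j => ?_
  have hcauchy := Complex.norm_cauchyTransform_le (f := fun ζ => Tb z0 lam u ζ i j) (z0 := z0)
    (A := η₂ / √L * c1norm D u) (B := η₃ * Real.log (3 * L) / L * c1norm D u)
    (Metric.subset_ball_two_mul_of_mem_closure hDR hz) (by positivity) hδ (by positivity)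
    (by positivity)
    (fun ζ hζ _ => (norm_le_mnorm _ i j).trans (hTb1 z0 lam hlam u hu ζ (subset_closure hζ)))
    (fun ζ hζ hδζ => (norm_le_mnorm _ i j).trans <|
      (hTb2 z0 lam hlam u hu ζ (subset_closure hζ) (by rintro rfl; simp at hδζ; linarith)).trans_eq
        (by ring))
  rw [Matrix.of_apply, norm_mul, show ‖(1 / 4 : ℂ)‖ = 1 / 4 by norm_num]
  calc 1 / 4 * ‖-(1 / (π : ℂ)) * ∫ ζ in D, Tb z0 lam u ζ i j / (ζ - z)‖
      ≤ 1 / 4 * (6 * (η₂ / √L * c1norm D u) * δ +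
          (7 + 2 * (2 * R)) * (η₃ * Real.log (3 * L) / L * c1norm D u) / δ) := by gcongr
    _ = (6 * (η₂ / √L) * δ + (7 + 4 * R) * η₃ * (Real.log (3 * L) / L) / δ) / 4 * c1norm D u := by
        ring
    _ ≤ _ := by
        gcongr
        exact near_far_balance hlam hη₂.le (by positivity)

/-- composition bound. With `T` the Cauchy transform (applied entrywise) and
`T̄_{z0,λ}` any family of operators satisfying the uniform bound `η₂|λ|^{-1/2}‖u‖` and the
pointwise bound `η₃ log(3|λ|)(1+|ζ-z0|)/(|λ||ζ-z0|²)‖u‖`, the composition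
`g_{z0,λ} = (1/4) T ∘ T̄_{z0,λ}` satisfies
`‖g_{z0,λ} u‖_{C(closure D)} ≤ η(D) (log(3|λ|)/|λ|^{3/4}) ‖u‖_{C¹_z̄}` for `|λ| ≥ 1`. -/
theorem stmt11 (n : ℕ) (D : Set ℂ) (hD : IsOpen D) (hDb : Bornology.IsBounded D)
    (Tb : ℂ → ℂ → (ℂ → Matrix (Fin n) (Fin n) ℂ) → ℂ → Matrix (Fin n) (Fin n) ℂ)
    (η₁ η₂ η₃ : ℝ) (hη₁ : 0 < η₁) (hη₂ : 0 < η₂) (hη₃ : 0 < η₃)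
    (hT : ∀ w : ℂ → ℂ, ContinuousOn w (closure D) → ∀ z ∈ closure D,
      ‖(-(1 / (Real.pi : ℂ)) * ∫ ζ in D, w ζ / (ζ - z))‖ ≤
        η₁ * ⨆ ζ : closure D, ‖w ζ‖)
    (hTb1 : ∀ (z0 lam : ℂ), 1 ≤ ‖lam‖ →
      ∀ u : ℂ → Matrix (Fin n) (Fin n) ℂ, C1zbarOn D u → ∀ ζ ∈ closure D,
        mnorm (Tb z0 lam u ζ) ≤ η₂ / Real.sqrt (‖lam‖) * c1norm D u)
    (hTb2 : ∀ (z0 lam : ℂ), 1 ≤ ‖lam‖ →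
      ∀ u : ℂ → Matrix (Fin n) (Fin n) ℂ, C1zbarOn D u → ∀ ζ ∈ closure D, ζ ≠ z0 →
        mnorm (Tb z0 lam u ζ) ≤
          η₃ * Real.log (3 * ‖lam‖) * (1 + ‖ζ - z0‖) /
            (‖lam‖ * ‖ζ - z0‖ ^ 2) * c1norm D u) :
    ∃ η : ℝ, 0 < η ∧ ∀ (z0 lam : ℂ), 1 ≤ ‖lam‖ →
      ∀ u : ℂ → Matrix (Fin n) (Fin n) ℂ, C1zbarOn D u → ∀ z ∈ closure D,
        mnorm (Matrix.of fun i j =>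
            (1 / 4 : ℂ) * (-(1 / (Real.pi : ℂ)) * ∫ ζ in D, Tb z0 lam u ζ i j / (ζ - z))) ≤
          η * (Real.log (3 * ‖lam‖) / ‖lam‖ ^ (3/4 : ℝ)) * c1norm D u :=
  stmt11_general n D hDb Tb η₂ η₃ hη₂ hη₃ hTb1 hTb2
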